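/- Let G = (V,E) be a finite connected Cayley graph of a finite group with symmetric generating set, with maximal degree d(G) and diameter diam(G), and let Y be a Banach space. Then the distortion satisfies c_Y(G) ≥ diam(G) · sqrt( λ₁(G; Y) / (2 d(G)) ), where λ₁(G; Y) = (1/2) inf over nonconstant f : V → Y of [ Σ_{v} Σ_{e=(v,w)} ‖f(w) − f(v)‖² ] / [ Σ_v ‖f(v) − m(f)‖² ] with m(f) = Σ_v f(v)/|V|, and c_Y(G) = inf over biLipschitz f : V → Y of ‖f‖_Lip ‖f⁻¹‖_Lip. -/
import Mathlib


/-- The word length with respect to a generating set `S`. -/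
noncomputable def wordLength {G : Type*} [Group G] (S : Set G) (g : G) : ℕ :=
  sInf {n | ∃ l : List G, l.length = n ∧ (∀ x ∈ l, x ∈ S ∨ x⁻¹ ∈ S) ∧ l.prod = g}

/-- The diameter of the Cayley graph of a finite group `Γ` with generating set `S`,
for the path (= word) metric `d_S(g,h) = ℓ_S(g h⁻¹)`. -/
noncomputable def cayleyDiam {Γ : Type*} [Group Γ] [Fintype Γ] (S : Finset Γ) : ℝ :=
  ⨆ g : Γ, ⨆ h : Γ, (wordLength (S : Set Γ) (g * h⁻¹) : ℝ)

/-- The mean `m(f) = Σ_v f(v) / |V|`. -/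
noncomputable def meanValue {Γ Y : Type*} [Fintype Γ] [NormedAddCommGroup Y]
    [NormedSpace ℝ Y] (f : Γ → Y) : Y :=
  (Fintype.card Γ : ℝ)⁻¹ • ∑ v : Γ, f v

/-- The Banach spectral gap `λ₁(G;Y)` of the Cayley graph of `(Γ,S)` with target `Y`:
`(1/2) inf` over nonconstant `f : Γ → Y` of
`Σ_v Σ_{e=(v,w)} ‖f(w)−f(v)‖² / Σ_v ‖f(v)−m(f)‖²`, the (oriented) edges at `v` being
the pairs `(v, s v)`, `s ∈ S`. -/
noncomputable def cayleySpectralGap {Γ : Type*} [Group Γ] [Fintype Γ]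
    (Y : Type*) [NormedAddCommGroup Y] [NormedSpace ℝ Y] (S : Finset Γ) : ℝ :=
  (1 / 2) * sInf {r : ℝ | ∃ f : Γ → Y, (∃ v w, f v ≠ f w) ∧
    r = (∑ v : Γ, ∑ s ∈ S, ‖f (s * v) - f v‖ ^ 2) /
        (∑ v : Γ, ‖f v - meanValue f‖ ^ 2)}

/-- The distortion `c_Y` of the Cayley graph of `(Γ,S)` (with the word metric) with
target `Y`: the infimum of `‖f‖_Lip · ‖f⁻¹‖_Lip` over biLipschitz `f : Γ → Y`. -/
noncomputable def cayleyDistortion {Γ : Type*} [Group Γ] [Fintype Γ]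
    (Y : Type*) [NormedAddCommGroup Y] (S : Finset Γ) : ℝ :=
  sInf {r : ℝ | ∃ (f : Γ → Y) (L₁ L₂ : ℝ), 0 ≤ L₁ ∧ 0 ≤ L₂ ∧
    (∀ v w, ‖f v - f w‖ ≤ L₁ * (wordLength (S : Set Γ) (v * w⁻¹) : ℝ)) ∧
    (∀ v w, (wordLength (S : Set Γ) (v * w⁻¹) : ℝ) ≤ L₂ * ‖f v - f w‖) ∧
    r = L₁ * L₂}

section Aux

variable {Γ : Type*} [Group Γ]

lemma wl_le {S : Set Γ} {g : Γ} (l : List Γ) (hl : ∀ x ∈ l, x ∈ S ∨ x⁻¹ ∈ S)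
    (hp : l.prod = g) : wordLength S g ≤ l.length :=
  Nat.sInf_le ⟨l, rfl, hl, hp⟩

lemma wl_one (S : Set Γ) : wordLength S 1 = 0 :=
  Nat.le_zero.mp (wl_le [] (by simp) (by simp))

lemma wl_nonempty {S : Set Γ} (hgen : Subgroup.closure S = ⊤) (g : Γ) :
    {n | ∃ l : List Γ, l.length = n ∧ (∀ x ∈ l, x ∈ S ∨ x⁻¹ ∈ S) ∧ l.prod = g}.Nonempty := by
  have hg : g ∈ Submonoid.closure (S ∪ S⁻¹) := by
    rw [← Subgroup.closure_toSubmonoid, hgen]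
    exact trivial
  obtain ⟨l, h1, h2⟩ := Submonoid.exists_list_of_mem_closure hg
  refine ⟨l.length, l, rfl, fun x hx => ?_, h2⟩
  rcases h1 x hx with h | h
  · exact Or.inl h
  · exact Or.inr (Set.mem_inv.mp h)

lemma wl_pos {S : Set Γ} (hgen : Subgroup.closure S = ⊤) {g : Γ} (hg : g ≠ 1) :
    1 ≤ wordLength S g := by
  rcases Nat.eq_zero_or_pos (wordLength S g) with h | h
  · exfalso
    have hmem := Nat.sInf_mem (wl_nonempty hgen g)
    rw [show sInf {n | ∃ l : List Γ, l.length = n ∧ (∀ x ∈ l, x ∈ S ∨ x⁻¹ ∈ S) ∧ l.prod = g}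
        = wordLength S g from rfl, h] at hmem
    obtain ⟨l, hlen, -, hprod⟩ := hmem
    rw [List.length_eq_zero_iff.mp hlen] at hprod
    exact hg (hprod ▸ rfl)
  · exact h

lemma diam_exists {Γ : Type*} [Group Γ] [Fintype Γ] (S : Finset Γ) :
    ∃ g₀ : Γ, (∀ g : Γ, wordLength (S : Set Γ) g ≤ wordLength (S : Set Γ) g₀) ∧
      cayleyDiam S = (wordLength (S : Set Γ) g₀ : ℝ) := by
  obtain ⟨g₀, hg₀⟩ := Finite.exists_max (fun g : Γ => wordLength (S : Set Γ) g)
  refine ⟨g₀, hg₀, le_antisymm ?_ ?_⟩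
  · refine ciSup_le fun g => ciSup_le fun h => ?_
    exact_mod_cast hg₀ (g * h⁻¹)
  · have h1 : (wordLength (S : Set Γ) (g₀ * (1 : Γ)⁻¹) : ℝ) ≤
        ⨆ h : Γ, (wordLength (S : Set Γ) (g₀ * h⁻¹) : ℝ) :=
      le_ciSup (f := fun h : Γ => (wordLength (S : Set Γ) (g₀ * h⁻¹) : ℝ)) (Set.Finite.bddAbove (Set.finite_range _)) 1
    have h2 : (⨆ h : Γ, (wordLength (S : Set Γ) (g₀ * h⁻¹) : ℝ)) ≤ cayleyDiam S :=
      le_ciSup (f := fun g : Γ => ⨆ h : Γ, (wordLength (S : Set Γ) (g * h⁻¹) : ℝ))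
        (Set.Finite.bddAbove (Set.finite_range _)) g₀
    simpa using h1.trans h2

lemma exists_biLip {Γ : Type*} [Group Γ] [Fintype Γ] {Y : Type*} [NormedAddCommGroup Y]
    [NormedSpace ℝ Y] (S : Finset Γ) (hgen : Subgroup.closure (S : Set Γ) = ⊤)
    {y : Y} (hy : y ≠ 0) :
    ∃ (f : Γ → Y) (L₁ L₂ : ℝ), 0 ≤ L₁ ∧ 0 ≤ L₂ ∧
      (∀ v w, ‖f v - f w‖ ≤ L₁ * (wordLength (S : Set Γ) (v * w⁻¹) : ℝ)) ∧
      (∀ v w, (wordLength (S : Set Γ) (v * w⁻¹) : ℝ) ≤ L₂ * ‖f v - f w‖) := by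
  classical
  obtain ⟨g₀, hmax, -⟩ := diam_exists S
  obtain ⟨f, hinj⟩ : ∃ f : Γ → Y, ∀ v w : Γ, v ≠ w → f v ≠ f w := by
    refine ⟨fun v => ((Fintype.equivFin Γ v : ℕ) : ℝ) • y, fun v w hvw h => hvw ?_⟩
    have h2 : ((Fintype.equivFin Γ v : ℕ) : ℝ) = ((Fintype.equivFin Γ w : ℕ) : ℝ) :=
      smul_left_injective ℝ hy h
    exact (Fintype.equivFin Γ).injective (Fin.ext (by exact_mod_cast h2))
  have hL₁0 : (0:ℝ) ≤ ∑ p : Γ × Γ, ‖f p.1 - f p.2‖ :=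
    Finset.sum_nonneg fun p _ => norm_nonneg _
  have hL₂0 : (0:ℝ) ≤ ∑ p : Γ × Γ, ((wordLength (S : Set Γ) g₀ : ℝ) * ‖f p.1 - f p.2‖⁻¹) :=
    Finset.sum_nonneg fun p _ => by positivity
  refine ⟨f, ∑ p : Γ × Γ, ‖f p.1 - f p.2‖,
    ∑ p : Γ × Γ, ((wordLength (S : Set Γ) g₀ : ℝ) * ‖f p.1 - f p.2‖⁻¹),
    hL₁0, hL₂0, fun v w => ?_, fun v w => ?_⟩
  · by_cases hvw : v = w
    · subst hvw
      simp only [sub_self, norm_zero]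
      positivity
    · have h1 : (1 : ℝ) ≤ (wordLength (S : Set Γ) (v * w⁻¹) : ℝ) := by
        exact_mod_cast wl_pos hgen (by simpa [mul_inv_eq_one] using hvw)
      calc ‖f v - f w‖ ≤ ∑ p : Γ × Γ, ‖f p.1 - f p.2‖ :=
            Finset.single_le_sum (f := fun p : Γ × Γ => ‖f p.1 - f p.2‖)
              (fun p _ => norm_nonneg _) (Finset.mem_univ (v, w))
        _ = (∑ p : Γ × Γ, ‖f p.1 - f p.2‖) * 1 := (mul_one _).symm
        _ ≤ _ := mul_le_mul_of_nonneg_left h1 hL₁0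
  · by_cases hvw : v = w
    · subst hvw
      simp [wl_one]
    · have hnorm : 0 < ‖f v - f w‖ := by
        rw [norm_pos_iff]; exact sub_ne_zero.mpr (hinj v w hvw)
      calc (wordLength (S : Set Γ) (v * w⁻¹) : ℝ) ≤ (wordLength (S : Set Γ) g₀ : ℝ) := by
            exact_mod_cast hmax (v * w⁻¹)
        _ = ((wordLength (S : Set Γ) g₀ : ℝ) * ‖f v - f w‖⁻¹) * ‖f v - f w‖ := by
            field_simp
        _ ≤ _ := by
            refine mul_le_mul_of_nonneg_right ?_ hnorm.le
            exact Finset.single_le_sum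
              (f := fun p : Γ × Γ => (wordLength (S : Set Γ) g₀ : ℝ) * ‖f p.1 - f p.2‖⁻¹)
              (fun p _ => by positivity) (Finset.mem_univ (v, w))

end Aux

set_option maxHeartbeats 2000000 in
/-- The (generalized) Jolissaint–Valette inequality: for the Cayley graph `G` of a
finite group `Γ` with symmetric generating set `S` (of degree `d(G) = #S`) and any
Banach space `Y`, `c_Y(G) ≥ diam(G) · √(λ₁(G;Y)/(2 d(G)))`. -/
theorem jolissaint_valette {Γ : Type*} [Group Γ] [Fintype Γ]
    (Y : Type*) [NormedAddCommGroup Y] [NormedSpace ℝ Y] [CompleteSpace Y]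
    (S : Finset Γ) (hsym : ∀ s ∈ S, s⁻¹ ∈ S) (hone : (1 : Γ) ∉ S)
    (hgen : Subgroup.closure (S : Set Γ) = ⊤) :
    cayleyDistortion Y S ≥
      cayleyDiam S * Real.sqrt (cayleySpectralGap Y S / (2 * (S.card : ℝ))) := by
  classical
  obtain ⟨g₀, hmax, hdiam⟩ := diam_exists S
  rcases Nat.eq_zero_or_pos (wordLength (S : Set Γ) g₀) with h0 | hpos
  · rw [ge_iff_le, hdiam, h0]
    simp only [Nat.cast_zero, zero_mul]
    unfold cayleyDistortion
    apply Real.sInf_nonneg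
    rintro r ⟨f, L₁, L₂, h1, h2, -, -, rfl⟩
    exact mul_nonneg h1 h2
  · have hg₀ : g₀ ≠ 1 := by
      intro h; rw [h, wl_one] at hpos; exact absurd hpos (lt_irrefl 0)
    obtain ⟨n, hn⟩ : ∃ n : ℕ, wordLength (S : Set Γ) g₀ = n := ⟨_, rfl⟩
    rw [hn] at hpos hdiam
    have hD1 : (1 : ℝ) ≤ (n : ℝ) := by exact_mod_cast hpos
    have hDpos : (0 : ℝ) < (n : ℝ) := lt_of_lt_of_le one_pos hD1
    rw [ge_iff_le, hdiam]
    have hScard : 0 < (S.card : ℝ) := by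
      rcases S.eq_empty_or_nonempty with h | h
      · exfalso
        apply hg₀
        have hmem : g₀ ∈ Subgroup.closure (S : Set Γ) := hgen ▸ Subgroup.mem_top g₀
        rw [h] at hmem
        simpa [Subgroup.closure_empty, Subgroup.mem_bot] using hmem
      · exact_mod_cast Finset.card_pos.mpr h
    have key : ∀ (f : Γ → Y) (L₁ L₂ : ℝ), 0 ≤ L₁ → 0 ≤ L₂ →
        (∀ v w, ‖f v - f w‖ ≤ L₁ * (wordLength (S : Set Γ) (v * w⁻¹) : ℝ)) →
        (∀ v w, (wordLength (S : Set Γ) (v * w⁻¹) : ℝ) ≤ L₂ * ‖f v - f w‖) →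
        (n : ℝ) * Real.sqrt (cayleySpectralGap Y S / (2 * (S.card : ℝ))) ≤ L₁ * L₂ := by
      intro f L₁ L₂ h1 h2 hf1 hf2
      have hD0 : (n : ℝ) ≠ 0 := ne_of_gt hDpos
      have hc0 : (S.card : ℝ) ≠ 0 := ne_of_gt hScard
      have hfg₀ : (n : ℝ) ≤ L₂ * ‖f g₀ - f 1‖ := by
        have h := hf2 g₀ 1
        rwa [inv_one, mul_one, hn] at h
      have hL₂pos : 0 < L₂ := by
        rcases h2.lt_or_eq with h | h
        · exact h
        · exfalso; rw [← h, zero_mul] at hfg₀; linarith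
      have hne : f g₀ ≠ f 1 := by
        intro h
        rw [h, sub_self, norm_zero, mul_zero] at hfg₀
        linarith
      -- numerator bound
      have hnum : (∑ v : Γ, ∑ s ∈ S, ‖f (s * v) - f v‖ ^ 2)
          ≤ (Fintype.card Γ : ℝ) * S.card * L₁ ^ 2 := by
        have hterm : ∀ v : Γ, ∀ s ∈ S, ‖f (s * v) - f v‖ ^ 2 ≤ L₁ ^ 2 := by
          intro v s hs
          have hb : ‖f (s * v) - f v‖ ≤ L₁ := by
            have h := hf1 (s * v) v
            rw [mul_inv_cancel_right] at h
            have hle : (wordLength (S : Set Γ) s : ℝ) ≤ 1 := by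
              exact_mod_cast wl_le [s] (by simpa using Or.inl hs) (List.prod_singleton)
            have hge : (0 : ℝ) ≤ (wordLength (S : Set Γ) s : ℝ) := Nat.cast_nonneg _
            nlinarith
          have h2 := pow_le_pow_left₀ (norm_nonneg _) hb 2
          simpa using h2
        calc (∑ v : Γ, ∑ s ∈ S, ‖f (s * v) - f v‖ ^ 2) ≤ ∑ _v : Γ, ∑ _s ∈ S, L₁ ^ 2 :=
              Finset.sum_le_sum fun v _ => Finset.sum_le_sum fun s hs => hterm v s hs
          _ = (Fintype.card Γ : ℝ) * S.card * L₁ ^ 2 := by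
              simp [Finset.sum_const, mul_assoc]
      -- denominator bound
      have hper : ∀ v : Γ, (n : ℝ) ^ 2
          ≤ L₂ ^ 2 * (2 * ‖f (g₀ * v) - meanValue f‖ ^ 2 + 2 * ‖f v - meanValue f‖ ^ 2) := by
        intro v
        have hdist : (n : ℝ) ≤ L₂ * ‖f (g₀ * v) - f v‖ := by
          have h := hf2 (g₀ * v) v
          rw [mul_inv_cancel_right] at h
          rw [hn] at h
          exact h
        have htri : ‖f (g₀ * v) - f v‖ ≤ ‖f (g₀ * v) - meanValue f‖ + ‖f v - meanValue f‖ := by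
          have h := norm_sub_le (f (g₀ * v) - meanValue f) (f v - meanValue f)
          simpa using h
        have ha : 0 ≤ ‖f (g₀ * v) - meanValue f‖ := norm_nonneg _
        have hb : 0 ≤ ‖f v - meanValue f‖ := norm_nonneg _
        have hdist' : (n : ℝ) ≤ L₂ * (‖f (g₀ * v) - meanValue f‖ + ‖f v - meanValue f‖) :=
          hdist.trans (mul_le_mul_of_nonneg_left htri hL₂pos.le)
        nlinarith [mul_nonneg (sub_nonneg.mpr hdist')
            (by positivity : (0:ℝ) ≤ L₂ * (‖f (g₀ * v) - meanValue f‖ + ‖f v - meanValue f‖)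
              + (n : ℝ)),
          sq_nonneg (‖f (g₀ * v) - meanValue f‖ - ‖f v - meanValue f‖)]
      have hre : (∑ v : Γ, ‖f (g₀ * v) - meanValue f‖ ^ 2)
          = ∑ v : Γ, ‖f v - meanValue f‖ ^ 2 :=
        Fintype.sum_equiv (Equiv.mulLeft g₀) _ _ (fun x => by simp)
      have hsum : (Fintype.card Γ : ℝ) * (n : ℝ) ^ 2
          ≤ L₂ ^ 2 * (4 * ∑ v : Γ, ‖f v - meanValue f‖ ^ 2) := by
        have h := Finset.sum_le_sum (fun v (_ : v ∈ Finset.univ) => hper v)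
        rw [Finset.sum_const, Finset.card_univ, nsmul_eq_mul] at h
        have hrhs : (∑ v : Γ, L₂ ^ 2 *
              (2 * ‖f (g₀ * v) - meanValue f‖ ^ 2 + 2 * ‖f v - meanValue f‖ ^ 2))
            = L₂ ^ 2 * (4 * ∑ v : Γ, ‖f v - meanValue f‖ ^ 2) := by
          rw [← Finset.mul_sum, Finset.sum_add_distrib, ← Finset.mul_sum, ← Finset.mul_sum, hre]
          ring
        rw [hrhs] at h
        exact h
      have hcardpos : (0 : ℝ) < (Fintype.card Γ : ℝ) := by
        exact_mod_cast Fintype.card_pos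
      have hcard0 : (Fintype.card Γ : ℝ) ≠ 0 := ne_of_gt hcardpos
      have hdenpos : 0 < ∑ v : Γ, ‖f v - meanValue f‖ ^ 2 := by
        nlinarith [mul_pos hcardpos (mul_pos hDpos hDpos)]
      have hden : (Fintype.card Γ : ℝ) * (n : ℝ) ^ 2 / (4 * L₂ ^ 2)
          ≤ ∑ v : Γ, ‖f v - meanValue f‖ ^ 2 := by
        rw [div_le_iff₀ (by positivity)]
        nlinarith
      -- spectral gap bound
      have hmem : (∑ v : Γ, ∑ s ∈ S, ‖f (s * v) - f v‖ ^ 2) /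
            (∑ v : Γ, ‖f v - meanValue f‖ ^ 2)
          ∈ {r : ℝ | ∃ f : Γ → Y, (∃ v w, f v ≠ f w) ∧
            r = (∑ v : Γ, ∑ s ∈ S, ‖f (s * v) - f v‖ ^ 2) /
                (∑ v : Γ, ‖f v - meanValue f‖ ^ 2)} :=
        ⟨f, ⟨g₀, 1, hne⟩, rfl⟩
      have hbdd : BddBelow {r : ℝ | ∃ f : Γ → Y, (∃ v w, f v ≠ f w) ∧
          r = (∑ v : Γ, ∑ s ∈ S, ‖f (s * v) - f v‖ ^ 2) /
              (∑ v : Γ, ‖f v - meanValue f‖ ^ 2)} := by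
        refine ⟨0, ?_⟩
        rintro r ⟨g, -, rfl⟩
        positivity
      have hlam : cayleySpectralGap Y S ≤ (1 / 2) * ((∑ v : Γ, ∑ s ∈ S, ‖f (s * v) - f v‖ ^ 2) /
          (∑ v : Γ, ‖f v - meanValue f‖ ^ 2)) := by
        unfold cayleySpectralGap
        exact mul_le_mul_of_nonneg_left (csInf_le hbdd hmem) (by norm_num)
      have hCpos : (0 : ℝ) < (Fintype.card Γ : ℝ) * (n : ℝ) ^ 2 / (4 * L₂ ^ 2) := by
        positivity
      have hratio : (∑ v : Γ, ∑ s ∈ S, ‖f (s * v) - f v‖ ^ 2) /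
            (∑ v : Γ, ‖f v - meanValue f‖ ^ 2)
          ≤ ((Fintype.card Γ : ℝ) * S.card * L₁ ^ 2) /
            ((Fintype.card Γ : ℝ) * (n : ℝ) ^ 2 / (4 * L₂ ^ 2)) :=
        div_le_div₀ (by positivity) hnum hCpos hden
      have heq : ((Fintype.card Γ : ℝ) * S.card * L₁ ^ 2) /
          ((Fintype.card Γ : ℝ) * (n : ℝ) ^ 2 / (4 * L₂ ^ 2))
          = 4 * S.card * L₁ ^ 2 * L₂ ^ 2 / (n : ℝ) ^ 2 := by
        have h1 : ((Fintype.card Γ : ℝ) * S.card * L₁ ^ 2) * (4 * L₂ ^ 2)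
            = (Fintype.card Γ : ℝ) * (4 * S.card * L₁ ^ 2 * L₂ ^ 2) := by ring
        rw [div_div_eq_mul_div, h1, mul_div_mul_left _ _ hcard0]
      have hlam2 : cayleySpectralGap Y S
          ≤ 2 * S.card * (L₁ * L₂) ^ 2 / (n : ℝ) ^ 2 := by
        rw [heq] at hratio
        have he : (1 / 2 : ℝ) * (4 * S.card * L₁ ^ 2 * L₂ ^ 2 / (n : ℝ) ^ 2)
            = 2 * S.card * (L₁ * L₂) ^ 2 / (n : ℝ) ^ 2 := by ring
        calc cayleySpectralGap Y S
            ≤ (1 / 2) * ((∑ v : Γ, ∑ s ∈ S, ‖f (s * v) - f v‖ ^ 2) /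
              (∑ v : Γ, ‖f v - meanValue f‖ ^ 2)) := hlam
          _ ≤ (1 / 2) * (4 * S.card * L₁ ^ 2 * L₂ ^ 2 / (n : ℝ) ^ 2) :=
              mul_le_mul_of_nonneg_left hratio (by norm_num)
          _ = 2 * S.card * (L₁ * L₂) ^ 2 / (n : ℝ) ^ 2 := he
      have hq : cayleySpectralGap Y S / (2 * (S.card : ℝ)) ≤ (L₁ * L₂ / (n : ℝ)) ^ 2 := by
        rw [div_le_iff₀ (mul_pos two_pos hScard)]
        have he : (L₁ * L₂ / (n : ℝ)) ^ 2 * (2 * (S.card : ℝ))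
            = 2 * S.card * (L₁ * L₂) ^ 2 / (n : ℝ) ^ 2 := by
          rw [div_pow, div_mul_eq_mul_div, mul_comm]
        exact hlam2.trans he.symm.le
      have hsq : Real.sqrt (cayleySpectralGap Y S / (2 * (S.card : ℝ)))
          ≤ L₁ * L₂ / (n : ℝ) := by
        have h0 : 0 ≤ L₁ * L₂ / (n : ℝ) := div_nonneg (mul_nonneg h1 h2) (Nat.cast_nonneg n)
        calc Real.sqrt (cayleySpectralGap Y S / (2 * (S.card : ℝ)))
            ≤ Real.sqrt ((L₁ * L₂ / (n : ℝ)) ^ 2) := Real.sqrt_le_sqrt hq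
          _ = L₁ * L₂ / (n : ℝ) := Real.sqrt_sq h0
      calc (n : ℝ) * Real.sqrt (cayleySpectralGap Y S / (2 * (S.card : ℝ)))
          ≤ (n : ℝ) * (L₁ * L₂ / (n : ℝ)) := mul_le_mul_of_nonneg_left hsq hDpos.le
        _ = L₁ * L₂ := by rw [mul_comm, div_mul_cancel₀ _ hD0]
    by_cases hY : ∃ y : Y, y ≠ 0
    · obtain ⟨y, hy⟩ := hY
      obtain ⟨f', L₁, L₂, a, b, c, d⟩ := exists_biLip S hgen hy
      unfold cayleyDistortion
      refine le_csInf ⟨L₁ * L₂, f', L₁, L₂, a, b, c, d, rfl⟩ ?_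
      rintro r ⟨f, M₁, M₂, h1, h2, h3, h4, rfl⟩
      exact key f M₁ M₂ h1 h2 h3 h4
    · push_neg at hY
      have hset : {r : ℝ | ∃ f : Γ → Y, (∃ v w, f v ≠ f w) ∧
          r = (∑ v : Γ, ∑ s ∈ S, ‖f (s * v) - f v‖ ^ 2) /
              (∑ v : Γ, ‖f v - meanValue f‖ ^ 2)} = ∅ := by
        rw [Set.eq_empty_iff_forall_notMem]
        rintro r ⟨f, ⟨v, w, hvw⟩, -⟩
        exact hvw (by rw [hY (f v), hY (f w)])
      have hspec : cayleySpectralGap Y S = 0 := by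
        unfold cayleySpectralGap
        rw [hset, Real.sInf_empty, mul_zero]
      rw [hspec, zero_div, Real.sqrt_zero, mul_zero]
      unfold cayleyDistortion
      apply Real.sInf_nonneg
      rintro r ⟨f, L₁, L₂, h1, h2, -, -, rfl⟩
      exact mul_nonneg h1 h2
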